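/- Suppose the linear operator Φ satisfies the ℓ2/ℓ1 RIP: m_k‖v‖₂ ≤ (1/P)‖Φv‖₁ ≤ M_k‖v‖₂ on Σ_k for k ∈ {K', K+K'}, with (1/√2)m_{K+K'} − M_{K'}√(K/K') ≥ γ > 0. Let x ∈ ℝ^N, z = Φx + ξ with ‖ξ‖₁ ≤ ε, and let x̃ be any minimizer of ‖v‖₁ subject to ‖z − Φv‖₁ ≤ ε. Then ‖x − x̃‖₂ ≤ C₀·‖x − x_K‖₁/√K' + D₀·ε/P, where x_K is the best K-term approximation of x, C₀ = 2(√2+1)(M_{K'}/m_{K+K'}) + 2, and D₀ = 4(√2+1)/m_{K+K'} (with γ = m_{K+K'}/(2√2) when K' > 8(M_{K'}/m_{K+K'})²K). -/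

import Mathlib

/-!
Write `h = xt - x` and let `T` be the support of `xK`. Minimality of `xt` against the feasible
point `x` gives the cone constraint `‖h_{Tᶜ}‖₁ ≤ ‖h_T‖₁ + 2‖x - xK‖₁`, and feasibility of both
gives the tube constraint `‖Φ h‖₁ ≤ 2ε`. Cut `h_{Tᶜ}` into blocks of `K'` entries in order of
decreasing magnitude: every entry of a block is at most the average magnitude of the previous
block, so the ℓ2 norms of all blocks but the first sum to at most `‖h_{Tᶜ}‖₁ / √K'`. The lower RIP
bound at level `K + K'` for `h_T` plus the first block, the upper RIP bound at level `K'` for the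
other blocks and the tube constraint bound the ℓ2 norm of the head; since
`2√2 M_{K'} √K ≤ m_{K+K'} √K'`, the head's own contribution through the cone constraint is absorbed.
-/

open Finset

noncomputable section

/-- ℓ2 norm on `ℝ^N`. -/
def l2norm {N : ℕ} (v : Fin N → ℝ) : ℝ := Real.sqrt (∑ i, (v i) ^ 2)

/-- ℓ1 norm on `ℝ^N`. -/
def l1norm {N : ℕ} (v : Fin N → ℝ) : ℝ := ∑ i, |v i|

/-- ℓ1 norm on `ℂ^P`. -/
def l1normC {P : ℕ} (w : Fin P → ℂ) : ℝ := ∑ p, ‖w p‖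

/-- `v` has at most `K` nonzero entries. -/
def IsSparse {N : ℕ} (K : ℕ) (v : Fin N → ℝ) : Prop := {i | v i ≠ 0}.ncard ≤ K

lemma l2norm_eq_norm {N : ℕ} (v : Fin N → ℝ) : l2norm v = ‖WithLp.toLp 2 v‖ := by
  simp [l2norm, EuclideanSpace.norm_eq]

lemma l1normC_eq_norm {P : ℕ} (w : Fin P → ℂ) : l1normC w = ‖WithLp.toLp 1 w‖ := by
  simp [l1normC, PiLp.norm_eq_of_L1]

lemma l2norm_nonneg {N : ℕ} (v : Fin N → ℝ) : 0 ≤ l2norm v := Real.sqrt_nonneg _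

lemma l2norm_sub_comm {N : ℕ} (u v : Fin N → ℝ) : l2norm (u - v) = l2norm (v - u) := by
  simp only [l2norm_eq_norm, WithLp.toLp_sub, norm_sub_rev]

lemma l2norm_add_le {N : ℕ} (u v : Fin N → ℝ) : l2norm (u + v) ≤ l2norm u + l2norm v := by
  simpa only [l2norm_eq_norm, WithLp.toLp_add] using norm_add_le _ _

lemma l2norm_sum_le {N : ℕ} {ι : Type*} (s : Finset ι) (v : ι → Fin N → ℝ) :
    l2norm (∑ j ∈ s, v j) ≤ ∑ j ∈ s, l2norm (v j) := by
  simpa only [l2norm_eq_norm, WithLp.toLp_sum] using norm_sum_le _ _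

lemma l2norm_indicator_le {N : ℕ} (s : Set (Fin N)) (v : Fin N → ℝ) :
    l2norm (s.indicator v) ≤ l2norm v := by
  unfold l2norm
  refine Real.sqrt_le_sqrt (sum_le_sum fun i _ => ?_)
  by_cases hi : i ∈ s <;> simp [hi, sq_nonneg]

lemma l1normC_sub_le {P : ℕ} (u w : Fin P → ℂ) : l1normC (u - w) ≤ l1normC u + l1normC w := by
  simpa only [l1normC_eq_norm, WithLp.toLp_sub] using norm_sub_le _ _

lemma l1normC_sum_le {P : ℕ} {ι : Type*} (s : Finset ι) (w : ι → Fin P → ℂ) :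
    l1normC (∑ j ∈ s, w j) ≤ ∑ j ∈ s, l1normC (w j) := by
  simpa only [l1normC_eq_norm, WithLp.toLp_sum] using norm_sum_le _ _

lemma l1norm_nonneg {N : ℕ} (v : Fin N → ℝ) : 0 ≤ l1norm v :=
  sum_nonneg fun _ _ => abs_nonneg _

lemma l1normC_nonneg {P : ℕ} (w : Fin P → ℂ) : 0 ≤ l1normC w :=
  sum_nonneg fun _ _ => norm_nonneg _

lemma l1norm_indicator_le {N : ℕ} (s : Set (Fin N)) (v : Fin N → ℝ) :
    l1norm (s.indicator v) ≤ l1norm v := by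
  refine sum_le_sum fun i _ => ?_
  by_cases hi : i ∈ s <;> simp [hi]

lemma card_mul_le_l1norm {N : ℕ} {v : Fin N → ℝ} {t : ℝ} (T : Finset (Fin N))
    (hT : ∀ i ∈ T, t ≤ |v i|) : #T * t ≤ l1norm v := by
  calc #T * t = #T • t := (nsmul_eq_mul _ _).symm
    _ ≤ ∑ i ∈ T, |v i| := card_nsmul_le_sum _ _ _ hT
    _ ≤ l1norm v := sum_le_sum_of_subset_of_nonneg (subset_univ _) fun _ _ _ => abs_nonneg _

namespace IsSparse

variable {N k l : ℕ} {u v : Fin N → ℝ}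

lemma add (hu : IsSparse k u) (hv : IsSparse l v) : IsSparse (k + l) (u + v) :=
  calc (Function.support (u + v)).ncard
      ≤ (Function.support u ∪ Function.support v).ncard :=
        Set.ncard_le_ncard (Function.support_add u v) (Set.toFinite _)
    _ ≤ k + l := (Set.ncard_union_le _ _).trans (add_le_add hu hv)

lemma card_support_le (hv : IsSparse k v) : #{i | v i ≠ 0} ≤ k := by
  rwa [IsSparse, ← coe_filter_univ, Set.ncard_coe_finset] at hv

lemma l2norm_le {t : ℝ} (hv : IsSparse k v) (ht : 0 ≤ t) (hvt : ∀ i, |v i| ≤ t) :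
    l2norm v ≤ √k * t := by
  have hsq : ∑ i, v i ^ 2 ≤ k * t ^ 2 :=
    calc ∑ i, v i ^ 2 = ∑ i with v i ≠ 0, v i ^ 2 :=
          (sum_filter_of_ne fun i _ hi => by simpa using hi).symm
      _ ≤ #{i | v i ≠ 0} • t ^ 2 := sum_le_card_nsmul _ _ _ fun i _ => by
            simpa only [sq_abs] using pow_le_pow_left₀ (abs_nonneg _) (hvt i) 2
      _ = #{i | v i ≠ 0} * t ^ 2 := nsmul_eq_mul _ _
      _ ≤ k * t ^ 2 := by gcongr; exact_mod_cast hv.card_support_le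
  calc l2norm v ≤ √(k * t ^ 2) := Real.sqrt_le_sqrt hsq
    _ = √k * t := by rw [Real.sqrt_mul (Nat.cast_nonneg _), Real.sqrt_sq ht]

lemma l1norm_le (hv : IsSparse k v) : l1norm v ≤ √k * l2norm v := by
  have hcs : (∑ i with v i ≠ 0, |v i|) ^ 2 ≤ #{i | v i ≠ 0} * ∑ i, v i ^ 2 := by
    simpa [sq_abs, sum_filter_of_ne] using
      sq_sum_le_card_mul_sum_sq (s := {i | v i ≠ 0}) (f := fun i => |v i|)
  calc l1norm v = ∑ i with v i ≠ 0, |v i| :=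
        (sum_filter_of_ne fun i _ hi => by simpa using hi).symm
    _ ≤ √(#{i | v i ≠ 0} * ∑ i, v i ^ 2) := Real.le_sqrt_of_sq_le hcs
    _ ≤ √k * l2norm v := by
        rw [Real.sqrt_mul (Nat.cast_nonneg _), l2norm]
        gcongr
        exact_mod_cast hv.card_support_le

end IsSparse

section SortedBlocks

variable {N : ℕ} (f : Fin N → ℝ) (K' : ℕ)

/-- Position of `i`, from `0`, when the entries of `f` are listed by decreasing magnitude. -/
def magnitudeRank (i : Fin N) : ℕ := (Tuple.sort fun i => -|f i|).symm i

def sortedBlock (j : ℕ) : Finset (Fin N) := {i | magnitudeRank f i / K' = j}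

def blockPart (j : ℕ) : Fin N → ℝ := fun i => if i ∈ sortedBlock f K' j then f i else 0

variable {f K'}

lemma magnitudeRank_lt (i : Fin N) : magnitudeRank f i < N := Fin.is_lt _

lemma magnitudeRank_injective : Function.Injective (magnitudeRank f) :=
  fun _ _ h => (Tuple.sort _).symm.injective (Fin.ext h)

lemma exists_magnitudeRank_eq {p : ℕ} (hp : p < N) : ∃ i, magnitudeRank f i = p :=
  ⟨Tuple.sort (fun i => -|f i|) ⟨p, hp⟩, by simp [magnitudeRank]⟩

lemma abs_le_of_magnitudeRank_le {i i' : Fin N} (h : magnitudeRank f i ≤ magnitudeRank f i') :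
    |f i'| ≤ |f i| := by
  simpa [magnitudeRank] using Tuple.monotone_sort (fun i => -|f i|) (Fin.le_def.2 h)

lemma mem_sortedBlock (hK' : 0 < K') {i : Fin N} {j : ℕ} :
    i ∈ sortedBlock f K' j ↔ j * K' ≤ magnitudeRank f i ∧ magnitudeRank f i < j * K' + K' := by
  simp only [sortedBlock, mem_filter, mem_univ, true_and, Nat.div_eq_iff hK']
  omega

lemma card_sortedBlock_le (hK' : 0 < K') (j : ℕ) : #(sortedBlock f K' j) ≤ K' := by
  calc #(sortedBlock f K' j) ≤ #(Ico (j * K') (j * K' + K')) :=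
        card_le_card_of_injOn _ (fun i hi => mem_Ico.2 ((mem_sortedBlock hK').1 hi))
          magnitudeRank_injective.injOn
    _ = K' := by simp

lemma le_card_sortedBlock (hK' : 0 < K') {j : ℕ} (hne : (sortedBlock f K' (j + 1)).Nonempty) :
    K' ≤ #(sortedBlock f K' j) := by
  obtain ⟨i₀, hi₀⟩ := hne
  have hi₀' := (mem_sortedBlock hK').1 hi₀
  have hsub : Ico (j * K') (j * K' + K') ⊆ (sortedBlock f K' j).image (magnitudeRank f) := by
    intro p hp
    rw [mem_Ico] at hp
    obtain ⟨i, rfl⟩ := exists_magnitudeRank_eq (f := f)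
      (show p < N by linarith [add_one_mul j K', magnitudeRank_lt (f := f) i₀])
    exact mem_image_of_mem _ ((mem_sortedBlock hK').2 hp)
  simpa using (card_le_card hsub).trans card_image_le

lemma abs_le_of_mem_sortedBlock_succ (hK' : 0 < K') {i i' : Fin N} {j : ℕ}
    (hi : i ∈ sortedBlock f K' (j + 1)) (hi' : i' ∈ sortedBlock f K' j) : |f i| ≤ |f i'| := by
  rw [mem_sortedBlock hK'] at hi hi'
  exact abs_le_of_magnitudeRank_le (by linarith [add_one_mul j K'])

lemma isSparse_blockPart (hK' : 0 < K') (j : ℕ) : IsSparse K' (blockPart f K' j) := by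
  have hsupp : Function.support (blockPart f K' j) ⊆ ↑(sortedBlock f K' j) := fun i hi => by
    by_contra h
    exact hi (if_neg h)
  calc (Function.support (blockPart f K' j)).ncard ≤ (↑(sortedBlock f K' j) : Set (Fin N)).ncard :=
        Set.ncard_le_ncard hsupp (Set.toFinite _)
    _ ≤ K' := by rw [Set.ncard_coe_finset]; exact card_sortedBlock_le hK' j

lemma magnitudeRank_div_le (i : Fin N) : magnitudeRank f i / K' ≤ N / K' :=
  Nat.div_le_div_right (magnitudeRank_lt i).le

lemma sum_blockPart : ∑ j ∈ range (N / K' + 1), blockPart f K' j = f := by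
  ext i
  simp [blockPart, sortedBlock, Finset.sum_apply, not_lt.2 (magnitudeRank_div_le i)]

lemma sum_l1norm_blockPart : ∑ j ∈ range (N / K' + 1), l1norm (blockPart f K' j) = l1norm f := by
  unfold l1norm
  rw [sum_comm]
  refine sum_congr rfl fun i _ => ?_
  simp [blockPart, sortedBlock, apply_ite, not_lt.2 (magnitudeRank_div_le i)]

lemma sqrt_mul_l2norm_blockPart_succ_le (hK' : 0 < K') (j : ℕ) :
    √K' * l2norm (blockPart f K' (j + 1)) ≤ l1norm (blockPart f K' j) := by
  by_cases hne : (sortedBlock f K' (j + 1)).Nonempty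
  · have hne' : (sortedBlock f K' j).Nonempty :=
      card_pos.1 (hK'.trans_le (le_card_sortedBlock hK' hne))
    set t := (sortedBlock f K' j).inf' hne' fun i => |f i|
    have ht : 0 ≤ t := le_inf' _ _ fun _ _ => abs_nonneg _
    have hdom : ∀ i, |blockPart f K' (j + 1) i| ≤ t := fun i => by
      by_cases hi : i ∈ sortedBlock f K' (j + 1)
      · simpa [blockPart, hi] using
          le_inf' _ _ fun i' hi' => abs_le_of_mem_sortedBlock_succ hK' hi hi'
      · simpa [blockPart, hi] using ht
    calc √K' * l2norm (blockPart f K' (j + 1)) ≤ √K' * (√K' * t) :=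
          mul_le_mul_of_nonneg_left ((isSparse_blockPart hK' _).l2norm_le ht hdom)
            (Real.sqrt_nonneg _)
      _ = K' * t := by rw [← mul_assoc, Real.mul_self_sqrt (Nat.cast_nonneg _)]
      _ ≤ #(sortedBlock f K' j) * t := by gcongr; exact le_card_sortedBlock hK' hne
      _ ≤ l1norm (blockPart f K' j) := card_mul_le_l1norm _ fun i hi => by
          simpa [blockPart, hi] using inf'_le (fun i => |f i|) hi
  · have hzero : blockPart f K' (j + 1) = 0 := by
      ext i
      simp [blockPart, not_nonempty_iff_eq_empty.1 hne]
    simpa [hzero, l2norm] using l1norm_nonneg _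

lemma sqrt_mul_sum_l2norm_blockPart_le (hK' : 0 < K') :
    √K' * ∑ j ∈ range (N / K'), l2norm (blockPart f K' (j + 1)) ≤ l1norm f :=
  calc √K' * ∑ j ∈ range (N / K'), l2norm (blockPart f K' (j + 1))
      ≤ ∑ j ∈ range (N / K'), l1norm (blockPart f K' j) := by
        rw [mul_sum]
        exact sum_le_sum fun j _ => sqrt_mul_l2norm_blockPart_succ_le hK' j
    _ ≤ ∑ j ∈ range (N / K' + 1), l1norm (blockPart f K' j) :=
        sum_le_sum_of_subset_of_nonneg (range_subset_range.2 (Nat.le_succ _))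
          fun _ _ _ => l1norm_nonneg _
    _ = l1norm f := sum_l1norm_blockPart

end SortedBlocks

lemma l1norm_indicator_compl_le_of_l1norm_add_le {N : ℕ} {x h : Fin N → ℝ} (T : Set (Fin N))
    (hmin : l1norm (x + h) ≤ l1norm x) :
    l1norm (Tᶜ.indicator h) ≤ l1norm (T.indicator h) + 2 * l1norm (Tᶜ.indicator x) := by
  have hpt : ∀ i, |Tᶜ.indicator h i| - |T.indicator h i|
      ≤ |x i + h i| - |x i| + 2 * |Tᶜ.indicator x i| := fun i => by
    by_cases hi : i ∈ T
    · simpa [hi] using abs_add_le (x i + h i) (-h i)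
    · have := abs_add_le (x i + h i) (-x i)
      simp only [add_neg_cancel_comm, abs_neg] at this
      simp [hi]
      linarith
  have hsum := sum_le_sum fun i (_ : i ∈ univ) => hpt i
  simp only [sum_sub_distrib, sum_add_distrib, ← mul_sum] at hsum
  unfold l1norm at *
  simp only [Pi.add_apply] at hmin
  linarith

lemma l1norm_indicator_compl_support_le {N : ℕ} (x y : Fin N → ℝ) :
    l1norm ((Function.support y)ᶜ.indicator x) ≤ l1norm (x - y) := by
  have h : (Function.support y)ᶜ.indicator x = (Function.support y)ᶜ.indicator (x - y) := by
    ext i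
    by_cases hi : y i = 0 <;> simp [hi]
  exact h ▸ l1norm_indicator_le _ _

lemma l1normC_map_sub_le {N P : ℕ} {Φ : (Fin N → ℝ) →ₗ[ℝ] (Fin P → ℂ)} {z : Fin P → ℂ}
    {u w : Fin N → ℝ} {ε : ℝ} (hu : l1normC (z - Φ u) ≤ ε) (hw : l1normC (z - Φ w) ≤ ε) :
    l1normC (Φ (u - w)) ≤ 2 * ε := by
  have h : Φ (u - w) = (z - Φ w) - (z - Φ u) := by rw [map_sub]; abel
  linarith [h ▸ l1normC_sub_le (z - Φ w) (z - Φ u)]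

lemma mul_l2norm_le_of_rip {N P k l : ℕ} {ι : Type*} {Φ : (Fin N → ℝ) →ₗ[ℝ] (Fin P → ℂ)}
    {m M ε : ℝ} {g h : Fin N → ℝ} {s : Finset ι} {v : ι → Fin N → ℝ}
    (hlower : ∀ v : Fin N → ℝ, IsSparse k v → m * l2norm v ≤ 1 / (P : ℝ) * l1normC (Φ v))
    (hupper : ∀ v : Fin N → ℝ, IsSparse l v → 1 / (P : ℝ) * l1normC (Φ v) ≤ M * l2norm v)
    (hg : IsSparse k g) (hv : ∀ j, IsSparse l (v j)) (hh : h = g + ∑ j ∈ s, v j)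
    (htube : l1normC (Φ h) ≤ 2 * ε) :
    m * l2norm g ≤ 2 * (ε / P) + M * ∑ j ∈ s, l2norm (v j) := by
  have hΦg : Φ g = Φ h - ∑ j ∈ s, Φ (v j) := by rw [hh, map_add, map_sum]; abel
  calc m * l2norm g ≤ 1 / (P : ℝ) * l1normC (Φ g) := hlower g hg
    _ ≤ 1 / (P : ℝ) * (l1normC (Φ h) + ∑ j ∈ s, l1normC (Φ (v j))) := by
        rw [hΦg]
        gcongr
        exact (l1normC_sub_le _ _).trans (add_le_add le_rfl (l1normC_sum_le _ _))
    _ = 1 / (P : ℝ) * l1normC (Φ h) + ∑ j ∈ s, 1 / (P : ℝ) * l1normC (Φ (v j)) := by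
        rw [mul_add, mul_sum]
    _ ≤ 1 / (P : ℝ) * (2 * ε) + ∑ j ∈ s, M * l2norm (v j) :=
        add_le_add (mul_le_mul_of_nonneg_left htube (by positivity))
          (sum_le_sum fun j _ => hupper _ (hv j))
    _ = 2 * (ε / P) + M * ∑ j ∈ s, l2norm (v j) := by rw [mul_sum]; ring

lemma two_mul_sqrt_two_mul_sqrt_le_of_lt {m M : ℝ} {K K' : ℕ} (hm : 0 < m) (hM : m ≤ M)
    (h : (K' : ℝ) > 8 * (M / m) ^ 2 * K) : 2 * √2 * M * √K ≤ m * √K' := by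
  have hsq : (2 * √2 * M * √K) ^ 2 ≤ (m * √K') ^ 2 := by
    have h8 : 8 * M ^ 2 * K ≤ m ^ 2 * K' := by
      have h' : 8 * M ^ 2 * K = m ^ 2 * (8 * (M / m) ^ 2 * K) := by field_simp
      rw [h']
      exact mul_le_mul_of_nonneg_left h.le (sq_nonneg m)
    simpa [mul_pow, Real.sq_sqrt, Nat.cast_nonneg, show (2 : ℝ) ^ 2 * 2 = 8 by norm_num] using h8
  exact (pow_le_pow_iff_left₀ (by positivity [hm.trans_le hM]) (by positivity) two_ne_zero).1 hsq

lemma error_bound_of_estimates {m M e σ A τ L k k' : ℝ} (hm : 0 < m) (hM : m ≤ M) (hk' : 0 < k')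
    (he : 0 ≤ e) (hA : 0 ≤ A) (hgap : 2 * √2 * M * k ≤ m * k')
    (hrip : m * A ≤ 2 * e + M * τ) (htail : k' * τ ≤ k * A + 2 * σ) (htri : L ≤ A + τ) :
    L ≤ (2 * (√2 + 1) * (M / m) + 2) * (σ / k') + 4 * (√2 + 1) / m * e := by
  set s := √2
  have hs : 1.4 ≤ s ∧ s ≤ 1.45 := by
    have := Real.sq_sqrt (show (0 : ℝ) ≤ 2 by norm_num)
    constructor <;> nlinarith [Real.sqrt_nonneg 2]
  set c := k / k'
  set σ' := σ / k'
  have hτ : τ ≤ c * A + 2 * σ' := by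
    have : τ ≤ (k * A + 2 * σ) / k' := (le_div_iff₀ hk').2 (by linarith)
    linarith [show (k * A + 2 * σ) / k' = c * A + 2 * σ' by ring]
  have hMc : 2 * s * M * c ≤ m := by
    rw [show 2 * s * M * c = 2 * s * M * k / k' by ring, div_le_iff₀ hk']
    exact hgap
  have hc : c ≤ 0.36 := by
    have : 2 * s * c ≤ 1 := le_of_mul_le_mul_right (by linarith) (hm.trans_le hM)
    nlinarith
  set X := m * A
  set Y := 2 * e + 2 * M * σ'
  have hX : 0 ≤ X := mul_nonneg hm.le hA
  have hXY : (2 * s - 1) * X ≤ 2 * s * Y := by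
    have hMτ : M * τ ≤ M * c * A + 2 * M * σ' := by
      nlinarith [mul_le_mul_of_nonneg_left hτ (hm.le.trans hM)]
    nlinarith [mul_le_mul_of_nonneg_right hMc hA]
  have hY : 0 ≤ Y := by nlinarith
  -- `(1 + c) X ≤ (2√2 + 1) / (2√2 - 1) Y ≤ (√2 + 1) Y`, as `c ≤ 1 / (2√2)`
  have hkey : m * ((1 + c) * A) ≤ (s + 1) * Y := by
    have h1 : 1.8 * X ≤ 2.9 * Y := by nlinarith
    nlinarith
  calc L ≤ (1 + c) * A + 2 * σ' := by linarith
    _ ≤ (s + 1) * Y / m + 2 * σ' := by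
        gcongr
        rw [le_div_iff₀ hm]
        linarith
    _ ≤ (2 * (s + 1) * (M / m) + 2) * σ' + 4 * (s + 1) / m * e := by
        have : (2 * (s + 1) * (M / m) + 2) * σ' + 4 * (s + 1) / m * e
            - ((s + 1) * Y / m + 2 * σ') = 2 * (s + 1) * e / m := by
          field_simp
          ring
        have : 0 ≤ 2 * (s + 1) * e / m := by positivity
        linarith

theorem l2norm_le_of_cone_of_tube {N P K K' : ℕ} {Φ : (Fin N → ℝ) →ₗ[ℝ] (Fin P → ℂ)}
    {m M σ ε : ℝ} (hm : 0 < m) (hM : m ≤ M) (hK' : 0 < K') (hgap : 2 * √2 * M * √K ≤ m * √K')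
    (hupper : ∀ v : Fin N → ℝ, IsSparse K' v → 1 / (P : ℝ) * l1normC (Φ v) ≤ M * l2norm v)
    (hlower : ∀ v : Fin N → ℝ, IsSparse (K + K') v → m * l2norm v ≤ 1 / (P : ℝ) * l1normC (Φ v))
    {T : Set (Fin N)} (hT : T.ncard ≤ K) {h : Fin N → ℝ}
    (hcone : l1norm (Tᶜ.indicator h) ≤ l1norm (T.indicator h) + 2 * σ)
    (htube : l1normC (Φ h) ≤ 2 * ε) (hε : 0 ≤ ε) :
    l2norm h ≤ (2 * (√2 + 1) * (M / m) + 2) * (σ / √K') + 4 * (√2 + 1) / m * (ε / P) := by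
  set v := blockPart (Tᶜ.indicator h) K'
  set g := T.indicator h + v 0
  have hdecomp : h = g + ∑ j ∈ range (N / K'), v (j + 1) := by
    rw [add_assoc, add_comm (v 0), ← sum_range_succ' v, sum_blockPart, Set.indicator_self_add_compl]
  have hTh : IsSparse K (T.indicator h) :=
    (Set.ncard_le_ncard Set.support_indicator_subset (Set.toFinite _)).trans hT
  have hTg : T.indicator g = T.indicator h := by
    ext i
    by_cases hi : i ∈ T <;> simp [g, v, blockPart, hi]
  have hhead : l1norm (T.indicator h) ≤ √K * l2norm g :=
    calc l1norm (T.indicator h) ≤ √K * l2norm (T.indicator g) := hTg ▸ hTh.l1norm_le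
      _ ≤ √K * l2norm g := by gcongr; exact l2norm_indicator_le _ _
  have hrip := mul_l2norm_le_of_rip hlower hupper (hTh.add (isSparse_blockPart hK' 0))
    (fun j => isSparse_blockPart hK' (j + 1)) hdecomp htube
  have htail := sqrt_mul_sum_l2norm_blockPart_le (f := Tᶜ.indicator h) hK'
  have htri : l2norm h ≤ l2norm g + ∑ j ∈ range (N / K'), l2norm (v (j + 1)) := by
    conv_lhs => rw [hdecomp]
    exact (l2norm_add_le _ _).trans (add_le_add le_rfl (l2norm_sum_le _ _))
  exact error_bound_of_estimates hm hM (by positivity) (by positivity) (l2norm_nonneg _) hgap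
    hrip (by linarith) htri

theorem bpdn_l1_instance_optimality_general (N P K K' : ℕ)
    (Φ : (Fin N → ℝ) →ₗ[ℝ] (Fin P → ℂ))
    (mKK' MK' : ℝ) (hm : 0 < mKK') (hM : mKK' ≤ MK')
    (hRIP1 : ∀ v : Fin N → ℝ, IsSparse K' v →
      mKK' * l2norm v ≤ (1 / (P : ℝ)) * l1normC (Φ v) ∧
      (1 / (P : ℝ)) * l1normC (Φ v) ≤ MK' * l2norm v)
    (hRIP2 : ∀ v : Fin N → ℝ, IsSparse (K + K') v →
      mKK' * l2norm v ≤ (1 / (P : ℝ)) * l1normC (Φ v) ∧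
      (1 / (P : ℝ)) * l1normC (Φ v) ≤ MK' * l2norm v)
    (hcond : (K' : ℝ) > 8 * (MK' / mKK') ^ 2 * K)
    (x : Fin N → ℝ) (ξ z : Fin P → ℂ) (ε : ℝ)
    (hξ : l1normC ξ ≤ ε) (hz : z = Φ x + ξ)
    (xK : Fin N → ℝ) (hxK : IsSparse K xK)
    (xt : Fin N → ℝ)
    (hfeas : l1normC (z - Φ xt) ≤ ε)
    (hmin : ∀ v : Fin N → ℝ, l1normC (z - Φ v) ≤ ε → l1norm xt ≤ l1norm v) :
    l2norm (x - xt)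
      ≤ (2 * (Real.sqrt 2 + 1) * (MK' / mKK') + 2) * (l1norm (x - xK) / Real.sqrt K')
        + (4 * (Real.sqrt 2 + 1) / mKK') * (ε / P) := by
  have hK' : 0 < K' := by
    exact_mod_cast (by positivity : (0 : ℝ) ≤ 8 * (MK' / mKK') ^ 2 * K).trans_lt hcond
  have hx : l1normC (z - Φ x) ≤ ε := by rwa [hz, add_sub_cancel_left]
  have hcone := l1norm_indicator_compl_le_of_l1norm_add_le (Function.support xK) (x := x)
    (h := xt - x) (by simpa using hmin x hx)
  rw [l2norm_sub_comm]
  exact l2norm_le_of_cone_of_tube hm hM hK' (two_mul_sqrt_two_mul_sqrt_le_of_lt hm hM hcond)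
    (fun v hv => (hRIP1 v hv).2) (fun v hv => (hRIP2 v hv).1) (T := Function.support xK) hxK
    (hcone.trans (by linarith [l1norm_indicator_compl_support_le x xK]))
    (l1normC_map_sub_le hfeas hx) ((l1normC_nonneg ξ).trans hξ)

/-- ℓ2/ℓ1 instance optimality of the ℓ1-fidelity basis pursuit denoise program:
under the ℓ2/ℓ1 RIP at sparsity levels `K'` and `K+K'` with
`(1/√2) m_{K+K'} − M_{K'} √(K/K') ≥ γ > 0` (implied by `K' > 8 (M_{K'}/m_{K+K'})² K`
with `γ = m_{K+K'}/(2√2)`), any minimizer `xt` of `‖v‖₁` s.t. `‖z − Φv‖₁ ≤ ε`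
with `z = Φx + ξ`, `‖ξ‖₁ ≤ ε`, satisfies
`‖x − xt‖₂ ≤ C₀ ‖x − x_K‖₁/√K' + D₀ ε/P` with
`C₀ = 2(√2+1)(M_{K'}/m_{K+K'}) + 2` and `D₀ = 4(√2+1)/m_{K+K'}`. -/
theorem bpdn_l1_instance_optimality (N P K K' : ℕ) (hP : 0 < P)
    (hKpos : 0 < K) (hK' : 2 * K < K')
    (Φ : (Fin N → ℝ) →ₗ[ℝ] (Fin P → ℂ))
    (mKK' MK' γ : ℝ) (hm : 0 < mKK') (hM : mKK' ≤ MK')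
    (hRIP1 : ∀ v : Fin N → ℝ, IsSparse K' v →
      mKK' * l2norm v ≤ (1 / (P : ℝ)) * l1normC (Φ v) ∧
      (1 / (P : ℝ)) * l1normC (Φ v) ≤ MK' * l2norm v)
    (hRIP2 : ∀ v : Fin N → ℝ, IsSparse (K + K') v →
      mKK' * l2norm v ≤ (1 / (P : ℝ)) * l1normC (Φ v) ∧
      (1 / (P : ℝ)) * l1normC (Φ v) ≤ MK' * l2norm v)
    (hcond : (K' : ℝ) > 8 * (MK' / mKK') ^ 2 * K)
    (hγ : γ = mKK' / (2 * Real.sqrt 2))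
    (hγcond : (1 / Real.sqrt 2) * mKK' - MK' * Real.sqrt ((K : ℝ) / K') ≥ γ ∧ γ > 0)
    (x : Fin N → ℝ) (ξ z : Fin P → ℂ) (ε : ℝ)
    (hξ : l1normC ξ ≤ ε) (hz : z = Φ x + ξ)
    (xK : Fin N → ℝ) (hxK : IsSparse K xK)
    (hbest : ∀ v : Fin N → ℝ, IsSparse K v → l1norm (x - xK) ≤ l1norm (x - v))
    (xt : Fin N → ℝ)
    (hfeas : l1normC (z - Φ xt) ≤ ε)
    (hmin : ∀ v : Fin N → ℝ, l1normC (z - Φ v) ≤ ε → l1norm xt ≤ l1norm v) :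
    l2norm (x - xt)
      ≤ (2 * (Real.sqrt 2 + 1) * (MK' / mKK') + 2) * (l1norm (x - xK) / Real.sqrt K')
        + (4 * (Real.sqrt 2 + 1) / mKK') * (ε / P) :=
  bpdn_l1_instance_optimality_general N P K K' Φ mKK' MK' hm hM hRIP1 hRIP2 hcond x ξ z ε hξ hz xK
    hxK xt hfeas hmin

end
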